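/- Consider the weighted graph G₁ with vertex set ℤ, edges E = {(x,y) ∈ ℤ×ℤ : |x−y| = 1}, vertex weight m ≡ 1, and edge weight c(n,n+1) = c(n+1,n) = (n+1)² + 1 for n ∈ ℤ. Then G₁ is χ-complete: the functions χ_n(x) = min(max(2 − |x|/(n+1), 0), 1) (for n ≥ 1) are finitely supported, take values in [0,1], equal 1 on [−(n+1), n+1] ∩ ℤ, and satisfy Σ_{e∈E, e⁻=x or e⁺=x} c(e)·(χ_n(e⁺) − χ_n(e⁻))² ≤ 40 for every n ≥ 1 and every x ∈ ℤ. -/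

import Mathlib

noncomputable section

/-- The edge weight of the graph `G₁` on `ℤ`: the edges are the pairs at distance `1`,
and `c(n, n+1) = c(n+1, n) = (n+1)² + 1`; non-adjacent pairs get weight `0`. -/
def cG1 : ℤ → ℤ → ℝ := fun x y => if |x - y| = 1 then ((max x y : ℤ) : ℝ) ^ 2 + 1 else 0

/-- The cut-off functions `χ_n(x) = min (max (2 - |x|/(n+1)) 0) 1`. -/
def chi : ℕ → ℤ → ℝ := fun n x => min (max (2 - |(x : ℝ)| / (n + 1)) 0) 1

/-!
`χ_n` is a clamped tent of slope `1/(n+1)` supported in `|x| < 2(n+1)`, so across an edge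
`(a, a ± 1)` its increment is at most `1/(n+1)`, and an edge with a nonzero increment has both
endpoints in `|x| ≤ 2(n+1)`, where its weight is at most `4(n+1)² + 1`. Each edge therefore
carries energy at most `4 + 1/(n+1)² ≤ 5`, and a vertex meets only two edges, each counted
twice in the sum.
-/

theorem abs_min_max_sub_min_max_le {α : Type*} [AddCommGroup α] [LinearOrder α]
    [IsOrderedAddMonoid α] (s t a b : α) :
    |min (max s a) b - min (max t a) b| ≤ |s - t| := by
  refine (abs_min_sub_min_le_max _ b _ b).trans (max_le (abs_max_sub_max_le_abs s t a) ?_)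
  rw [sub_self, abs_zero]
  exact abs_nonneg _

theorem cG1_of_abs_sub_ne_one {a b : ℤ} (h : |a - b| ≠ 1) : cG1 a b = 0 := if_neg h

namespace chi

variable (n : ℕ)

theorem nonneg (x : ℤ) : 0 ≤ chi n x := le_min (le_max_right _ _) zero_le_one

theorem le_one (x : ℤ) : chi n x ≤ 1 := min_le_right _ _

theorem eq_one_of_abs_le {x : ℤ} (hx : |x| ≤ (n : ℤ) + 1) : chi n x = 1 := by
  have hx' : |(x : ℝ)| ≤ n + 1 := by exact_mod_cast hx
  have : 1 ≤ 2 - |(x : ℝ)| / (n + 1) := by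
    rw [le_sub_comm, div_le_iff₀ (by positivity)]; linarith
  rw [chi, max_eq_left (by linarith), min_eq_right this]

theorem eq_zero_of_le_abs {x : ℤ} (hx : 2 * ((n : ℤ) + 1) ≤ |x|) : chi n x = 0 := by
  have hx' : 2 * ((n : ℝ) + 1) ≤ |(x : ℝ)| := by exact_mod_cast hx
  have : 2 - |(x : ℝ)| / (n + 1) ≤ 0 := by
    rw [sub_nonpos, le_div_iff₀ (by positivity)]; linarith
  rw [chi, max_eq_right this, min_eq_left zero_le_one]

theorem support_subset_Ioo :
    Function.support (chi n) ⊆ Set.Ioo (-(2 * ((n : ℤ) + 1))) (2 * ((n : ℤ) + 1)) := by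
  intro x hx
  rw [Set.mem_Ioo, ← abs_lt]
  by_contra! h
  exact hx (eq_zero_of_le_abs n h)

theorem abs_sub_le (x y : ℤ) : |chi n x - chi n y| ≤ |(x : ℝ) - y| / (n + 1) := by
  refine (abs_min_max_sub_min_max_le (α := ℝ) _ _ _ _).trans ?_
  rw [sub_sub_sub_cancel_left, ← sub_div, abs_div, abs_of_pos (by positivity : (0 : ℝ) < n + 1)]
  exact div_le_div_of_nonneg_right ((abs_abs_sub_abs_le_abs_sub _ _).trans_eq (abs_sub_comm _ _))
    (by positivity)

theorem cG1_mul_sq_sub_le (a b : ℤ) : cG1 a b * (chi n b - chi n a) ^ 2 ≤ 5 := by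
  by_cases hab : |a - b| = 1
  swap
  · rw [cG1_of_abs_sub_ne_one hab, zero_mul]; norm_num
  by_cases hfar : 2 * ((n : ℤ) + 1) ≤ |a| ∧ 2 * ((n : ℤ) + 1) ≤ |b|
  · rw [eq_zero_of_le_abs n hfar.1, eq_zero_of_le_abs n hfar.2]; norm_num
  set N : ℝ := n + 1
  have hN : 1 ≤ N := by simp [N]
  have hmax : |max a b| ≤ 2 * ((n : ℤ) + 1) := by
    simp only [Int.abs_eq_natAbs] at hab hfar ⊢
    omega
  have hc : cG1 a b ≤ 4 * N ^ 2 + 1 := by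
    have hmax' : |((max a b : ℤ) : ℝ)| ≤ 2 * N := by simp only [N]; exact_mod_cast hmax
    rw [cG1, if_pos hab]
    nlinarith [sq_abs ((max a b : ℤ) : ℝ), abs_nonneg ((max a b : ℤ) : ℝ)]
  have hd : (chi n b - chi n a) ^ 2 ≤ (1 / N) ^ 2 := by
    have hba : |(b : ℝ) - a| = 1 := by rw [abs_sub_comm]; exact_mod_cast hab
    have h := abs_sub_le n b a
    rw [hba] at h
    exact sq_le_sq' (abs_le.mp h).1 (abs_le.mp h).2
  calc cG1 a b * (chi n b - chi n a) ^ 2 ≤ (4 * N ^ 2 + 1) * (1 / N) ^ 2 :=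
        mul_le_mul hc hd (sq_nonneg _) (by positivity)
    _ = 4 + 1 / N ^ 2 := by field_simp
    _ ≤ 5 := by
        have : 1 / N ^ 2 ≤ 1 := by rw [div_le_one (by positivity)]; nlinarith
        linarith

theorem finsum_cG1_mul_sq_sub_le (x : ℤ) :
    ∑ᶠ y : ℤ, (cG1 x y * (chi n y - chi n x) ^ 2 + cG1 y x * (chi n x - chi n y) ^ 2) ≤ 20 := by
  have hsupp : Function.support
      (fun y => cG1 x y * (chi n y - chi n x) ^ 2 + cG1 y x * (chi n x - chi n y) ^ 2) ⊆
      ↑({x - 1, x + 1} : Finset ℤ) := by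
    intro y hy
    by_contra hy'
    simp only [Finset.coe_pair, Set.mem_insert_iff, Set.mem_singleton_iff, not_or] at hy'
    have hxy : |x - y| ≠ 1 := by simp only [Int.abs_eq_natAbs]; omega
    have hyx : |y - x| ≠ 1 := by rwa [abs_sub_comm]
    simp [cG1_of_abs_sub_ne_one hxy, cG1_of_abs_sub_ne_one hyx] at hy
  rw [finsum_eq_sum_of_support_subset _ hsupp]
  calc _ ≤ ({x - 1, x + 1} : Finset ℤ).card • (10 : ℝ) :=
        Finset.sum_le_card_nsmul _ _ _ fun y _ => by
          linarith [cG1_mul_sq_sub_le n x y, cG1_mul_sq_sub_le n y x]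
    _ ≤ 2 • (10 : ℝ) := by gcongr; exact Finset.card_le_two
    _ = 20 := by norm_num

end chi

/-- The weighted graph `G₁` on `ℤ` (vertex weight `m ≡ 1`, edge weight
`c(n, n+1) = (n+1)² + 1`) is `χ`-complete: for every `n ≥ 1` the function
`χ_n(x) = min (max (2 - |x|/(n+1)) 0) 1` is finitely supported, takes values in `[0, 1]`,
equals `1` on `[-(n+1), n+1] ∩ ℤ`, and satisfies
`Σ_{e ∈ E, e⁻ = x or e⁺ = x} c(e) (dχ_n(e))² ≤ 40` for every vertex `x ∈ ℤ`. -/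
theorem G1_chi_complete :
    ∀ n : ℕ, 1 ≤ n →
      (Function.support (chi n)).Finite ∧
      (∀ x : ℤ, 0 ≤ chi n x ∧ chi n x ≤ 1) ∧
      (∀ x : ℤ, |x| ≤ (n : ℤ) + 1 → chi n x = 1) ∧
      (∀ x : ℤ,
        ∑ᶠ y : ℤ, (cG1 x y * (chi n y - chi n x) ^ 2 + cG1 y x * (chi n x - chi n y) ^ 2)
          ≤ 40) := by
  intro n _
  refine ⟨(Set.finite_Ioo _ _).subset (chi.support_subset_Ioo n),
    fun x => ⟨chi.nonneg n x, chi.le_one n x⟩, fun x => chi.eq_one_of_abs_le n,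
    fun x => (chi.finsum_cG1_mul_sq_sub_le n x).trans (by norm_num)⟩

end
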